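/- arXiv:hep-th/0309018 — 2 statements merged into one kernel-verified Lean document; each statement's English description precedes it below -/
import Mathlib

section
/- The function φ^Z has a simple pole at z = 0: the limit of z·φ^Z(z) as z → 0 (z ≠ 0) exists and equals 2i/sin(π/N). Consequently the normalization constant R = 2πi·Res_{z=0} φ^Z(z) equals −4π/sin(π/N). -/
open Complex Topology Filter

/-- `φ^Z(z) = 1/(sinh(z/2)·sinh(½(z − 2πi/N)))`. -/
noncomputable def phiZ (N : ℕ) (z : ℂ) : ℂ :=
  1 / (Complex.sinh (z / 2) * Complex.sinh ((z - 2 * (Real.pi : ℂ) * I / N) / 2))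

/-!
The factor `z / sinh (z / 2)` tends to `2`, the inverse of the derivative `1/2` of `sinh (z / 2)`
at its zero `0`. The other factor `1 / sinh ((z - 2πi/N) / 2)` is continuous at `0`, where
`sinh (-πi/N) = -i sin (π/N)` does not vanish because `0 < π/N < π`.
-/

theorem HasDerivAt.tendsto_self_div_of_apply_zero {𝕜 : Type*} [NontriviallyNormedField 𝕜]
    {f : 𝕜 → 𝕜} {f' : 𝕜} (hf : HasDerivAt f f' 0) (h0 : f 0 = 0) (hf' : f' ≠ 0) :
    Tendsto (fun z => z / f z) (𝓝[≠] 0) (𝓝 f'⁻¹) := by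
  refine ((hasDerivAt_iff_tendsto_slope.mp hf).inv₀ hf').congr fun z => ?_
  simp [slope_def_field, h0]

theorem Complex.tendsto_self_div_sinh_half :
    Tendsto (fun z : ℂ => z / sinh (z / 2)) (𝓝[≠] 0) (𝓝 2) := by
  have hd : HasDerivAt (fun z : ℂ => sinh (z / 2)) 2⁻¹ 0 := by
    simpa [Function.comp_def] using
      (hasDerivAt_sinh (0 / 2 : ℂ)).comp 0 ((hasDerivAt_id (0 : ℂ)).div_const 2)
  simpa using hd.tendsto_self_div_of_apply_zero (by simp) (by norm_num)

theorem Complex.sin_pi_div_natCast_ne_zero {N : ℕ} (hN : 1 < N) :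
    sin ((Real.pi : ℂ) / N) ≠ 0 := by
  have hN' : (1 : ℝ) < N := by exact_mod_cast hN
  have hpos : 0 < Real.sin (Real.pi / N) :=
    Real.sin_pos_of_pos_of_lt_pi (by positivity) (div_lt_self Real.pi_pos hN')
  exact_mod_cast hpos.ne'

/-- `φ^Z` has a simple pole at `z = 0` with residue `2i/sin(π/N)`, hence
`R = 2πi·Res_{z=0} φ^Z = −4π/sin(π/N)`. -/
theorem phiZ_residue_at_zero (N : ℕ) (hN : 2 ≤ N) :
    Tendsto (fun z : ℂ => z * phiZ N z) (𝓝[≠] (0 : ℂ))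
      (𝓝 (2 * I / Complex.sin ((Real.pi : ℂ) / N))) ∧
    2 * (Real.pi : ℂ) * I * (2 * I / Complex.sin ((Real.pi : ℂ) / N)) =
      -4 * (Real.pi : ℂ) / Complex.sin ((Real.pi : ℂ) / N) := by
  have hs := sin_pi_div_natCast_ne_zero hN
  refine ⟨?_, by field_simp; linear_combination 4 * I_sq⟩
  set c : ℂ := 2 * Real.pi * I / N
  have hc : sinh ((0 - c) / 2) = -(sin (Real.pi / N) * I) := by
    rw [← sinh_mul_I, ← sinh_neg]; congr 1; ring
  have hpole : Tendsto (fun z : ℂ => (sinh ((z - c) / 2))⁻¹) (𝓝[≠] 0)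
      (𝓝 (sinh ((0 - c) / 2))⁻¹) :=
    ((by fun_prop : Continuous fun z : ℂ => sinh ((z - c) / 2)).continuousAt.inv₀
      (by rw [hc]; simp [hs])).tendsto.mono_left nhdsWithin_le_nhds
  convert tendsto_self_div_sinh_half.mul hpole using 2 with z
  · simp [phiZ, c, div_eq_mul_inv]; ring
  · rw [hc, inv_neg, mul_inv, inv_I]; ring
end

section
/- The character χ_b evaluates as follows. Let N ≥ 3, let j be an integer with 1 ≤ j ≤ N−2, let b be an integer with 1 ≤ b ≤ N−1, and let γ̂ ∈ ℂ. Set ω = exp(2πi/N) and define q_0 = 1, q_k = ω^{−k} for k ∈ {1,…,N−1} with k ∉ {j, j+1}, q_j = ω^{−j}·exp(−2πiγ̂/N), and q_{j+1} = ω^{−(j+1)}·exp(2πiγ̂/N). Then the b-th elementary symmetric polynomial e_b(q_0, q_1, …, q_{N−1}) = Σ_{0 ≤ k_1 < ⋯ < k_b ≤ N−1} q_{k_1}⋯q_{k_b} satisfies exp(iπb(N−1)/N)·ω^{b}·e_b(q_0, …, q_{N−1}) = −4·ω^{−bj}·(sin(bπ/N)/sin(π/N))·sin(πγ̂/N)·sin(π(1−γ̂)/N),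 where sin denotes the complex sine. -/
/-!
Put `ζ = ω⁻¹`, so that `q_k = ζ^k` except that `q_j` and `q_{j+1}` carry the extra factors
`x = exp(-2πiγ̂/N)` and `y = x⁻¹`. Because `xy = 1`, the generating polynomial `∏ (X + q_k)`
differs from `∏ (X + ζ^k) = X^N - (-1)^N` only by `(ζ^j x + ζ^{j+1} y - ζ^j - ζ^{j+1}) X R`,
where `R = ∏_{k ≠ j, j+1} (X + ζ^k)`. As `X^N - (-1)^N` has no middle coefficients, `e_b(q)`
is that scalar times a coefficient of `R = (X^N - (-1)^N) / ((X + ζ^j)(X + ζ^{j+1}))`, which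
partial fractions and the geometric series give as
`((-ζ^j)^b - (-ζ^{j+1})^b) / (ζ^{j+1} - ζ^j)`. In terms of `e^{iπ/N}` and `e^{iπγ̂/N}` the
result is the stated product of sines.
-/

open Complex Polynomial Finset

section Polynomial

variable {R : Type*} [CommRing R]

theorem X_add_C_mul_geom_sum₂ (e : R) (n : ℕ) :
    (X + C e) * ∑ i ∈ range n, C ((-e) ^ (n - 1 - i)) * X ^ i = X ^ n - C ((-e) ^ n) := by
  rw [← sub_neg_eq_add, ← map_neg, mul_comm, C_pow, ← geom_sum₂_mul]
  congr 1
  exact sum_congr rfl fun i _ => by rw [C_pow, mul_comm]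

theorem coeff_succ_X_add_C_mul_X_add_C_mul_of_mul_eq_one {a a' x y : R} (hxy : x * y = 1)
    (Q : R[X]) (m : ℕ) :
    ((X + C (a * x)) * (X + C (a' * y)) * Q).coeff (m + 1) =
      ((X + C a) * (X + C a') * Q).coeff (m + 1) + (a * x + a' * y - a - a') * Q.coeff m := by
  have hC : C x * C y = 1 := by rw [← C_mul, hxy, C_1]
  have h : (X + C (a * x)) * (X + C (a' * y)) * Q =
      (X + C a) * (X + C a') * Q + C (a * x + a' * y - a - a') * (X * Q) := by
    simp only [map_add, map_sub, map_mul]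
    linear_combination C a * C a' * Q * hC
  rw [h, coeff_add, coeff_C_mul, coeff_X_mul]

theorem sub_mul_coeff_of_X_add_C_mul_X_add_C_mul_eq [IsDomain R] {a a' c : R} {n m : ℕ}
    {Q : R[X]} (hQ : (X + C a) * (X + C a') * Q = X ^ n - C c) (ha : (-a) ^ n = c)
    (ha' : (-a') ^ n = c) (hm : m < n) :
    (a' - a) * Q.coeff m = (-a) ^ (n - 1 - m) - (-a') ^ (n - 1 - m) := by
  have h := X_add_C_mul_geom_sum₂ a n
  have h' := X_add_C_mul_geom_sum₂ a' n
  rw [ha] at h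
  rw [ha'] at h'
  have hG : C (a' - a) * Q = ∑ i ∈ range n, C ((-a) ^ (n - 1 - i)) * X ^ i -
      ∑ i ∈ range n, C ((-a') ^ (n - 1 - i)) * X ^ i := by
    apply mul_left_cancel₀ (mul_ne_zero (X_add_C_ne_zero a) (X_add_C_ne_zero a'))
    rw [map_sub]
    linear_combination (C a' - C a) * hQ - (X + C a') * h + (X + C a) * h'
  have := congrArg (coeff · m) hG
  simp only [coeff_C_mul, coeff_sub, finsetSum_coeff, coeff_X_pow, mul_ite, mul_one, mul_zero]
    at this
  rwa [sum_ite_eq, sum_ite_eq, if_pos (mem_range.2 hm), if_pos (mem_range.2 hm)] at this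

theorem IsPrimitiveRoot.prod_X_add_C_pow_eq [IsDomain R] {ζ : R} {n : ℕ}
    (hζ : IsPrimitiveRoot ζ n) (hn : 0 < n) :
    ∏ k ∈ range n, (X + C (ζ ^ k)) = X ^ n - C ((-1) ^ n) := by
  rw [X_pow_sub_C_eq_prod hζ hn rfl]
  exact prod_congr rfl fun k _ => by rw [mul_neg_one, map_neg, sub_neg_eq_add]

theorem IsPrimitiveRoot.sub_one_mul_esymm_of_scaled_pair [IsDomain R] {ζ : R} {N j b : ℕ}
    (hζ : IsPrimitiveRoot ζ N) (hj : j + 1 < N) (hb : 0 < b) (hbN : b < N) {x y : R}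
    (hxy : x * y = 1) {q : ℕ → R} (hqj : q j = ζ ^ j * x) (hqj1 : q (j + 1) = ζ ^ (j + 1) * y)
    (hq : ∀ k, k ≠ j → k ≠ j + 1 → q k = ζ ^ k) :
    (ζ - 1) * ∑ s ∈ powersetCard b (range N), ∏ k ∈ s, q k =
      (-1) ^ b * ζ ^ (j * b) * (1 - ζ ^ b) * (x - 1 + ζ * (y - 1)) := by
  set T := ((range N).erase j).erase (j + 1)
  have hsplit (f : ℕ → R[X]) : ∏ k ∈ range N, f k = f j * f (j + 1) * ∏ k ∈ T, f k := by
    rw [← mul_prod_erase _ f (show j ∈ range N from mem_range.2 (by omega)),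
      ← mul_prod_erase _ f (mem_erase.2 ⟨by omega, mem_range.2 hj⟩), mul_assoc]
  set Q := ∏ k ∈ T, (X + C (ζ ^ k))
  have hQ : (X + C (ζ ^ j)) * (X + C (ζ ^ (j + 1))) * Q = X ^ N - C ((-1) ^ N) := by
    rw [← hsplit fun k => X + C (ζ ^ k), hζ.prod_X_add_C_pow_eq (by omega)]
  have hprod : ∏ k ∈ range N, (X + C (q k)) =
      (X + C (ζ ^ j * x)) * (X + C (ζ ^ (j + 1) * y)) * Q := by
    rw [hsplit, hqj, hqj1]
    refine congrArg _ (prod_congr rfl fun k hk => ?_)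
    simp only [T, mem_erase] at hk
    rw [hq k hk.2.1 hk.1]
  have hsum : ∑ s ∈ powersetCard b (range N), ∏ k ∈ s, q k =
      (ζ ^ j * x + ζ ^ (j + 1) * y - ζ ^ j - ζ ^ (j + 1)) * Q.coeff (N - 1 - b) := by
    have h := (range N).prod_X_add_C_coeff q (k := N - b) (by simp)
    rw [card_range, Nat.sub_sub_self hbN.le] at h
    rw [← h, hprod, show N - b = N - 1 - b + 1 by omega,
      coeff_succ_X_add_C_mul_X_add_C_mul_of_mul_eq_one hxy, hQ, coeff_sub, coeff_X_pow, coeff_C,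
      if_neg (by omega), if_neg (by omega), sub_zero, zero_add]
  have hpow (i : ℕ) : (-ζ ^ i) ^ N = (-1) ^ N := by
    rw [neg_pow, ← pow_mul, mul_comm i, pow_mul, hζ.pow_eq_one, one_pow, mul_one]
  have hQcoeff := sub_mul_coeff_of_X_add_C_mul_X_add_C_mul_eq hQ (hpow j) (hpow (j + 1))
    (show N - 1 - b < N by omega)
  rw [show N - 1 - (N - 1 - b) = b by omega] at hQcoeff
  apply mul_left_cancel₀ (pow_ne_zero j (hζ.ne_zero (by omega)))
  rw [hsum]
  linear_combination (x - 1 + ζ * (y - 1)) * ζ ^ j * hQcoeff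

end Polynomial

theorem Complex.sin_eq_of_exp_mul_I {z w : ℂ} (h : exp (z * I) = w) :
    sin z = (w⁻¹ - w) * I / 2 := by
  rw [sin, neg_mul, exp_neg, h]

theorem Complex.exp_mul_one_sub_pow_mul_eq_sin_mul_sin (θ φ : ℂ) (b : ℕ)
    (hθ : exp (-2 * θ * I) ≠ 1) :
    exp (b * θ * I) * (1 - exp (-2 * θ * I) ^ b) *
        (exp (-2 * φ * I) - 1 + exp (-2 * θ * I) * (exp (2 * φ * I) - 1)) =
      -4 * (exp (-2 * θ * I) - 1) * (sin (b * θ) / sin θ) * sin φ * sin (θ - φ) := by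
  have hpow (k : ℕ) (z : ℂ) : exp (k * z * I) = exp (z * I) ^ k := by
    rw [← exp_nat_mul]; ring_nf
  have hsq (z : ℂ) : exp (2 * z * I) = exp (z * I) ^ 2 := by exact_mod_cast hpow 2 z
  have hsq_inv (z : ℂ) : exp (-2 * z * I) = (exp (z * I) ^ 2)⁻¹ := by
    rw [← hsq, ← exp_neg]; ring_nf
  rw [sin_eq_of_exp_mul_I (z := θ) rfl, sin_eq_of_exp_mul_I (hpow b θ),
    sin_eq_of_exp_mul_I (z := φ) rfl,
    sin_eq_of_exp_mul_I (w := exp (θ * I) * (exp (φ * I))⁻¹)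
      (by rw [← exp_neg, ← exp_add]; ring_nf),
    hpow b, hsq, hsq_inv, hsq_inv]
  rw [hsq_inv] at hθ
  have hu0 := exp_ne_zero (θ * I)
  have hg0 := exp_ne_zero (φ * I)
  generalize exp (θ * I) = u at *
  generalize exp (φ * I) = g at *
  have hu2 : 1 - u ^ 2 ≠ 0 := by
    contrapose! hθ; rw [← sub_eq_zero.1 hθ, inv_one]
  rw [inv_pow, ← pow_mul, mul_comm 2 b, pow_mul]
  field_simp
  -- rests on `g⁻² - 1 + u⁻² (g² - 1) = u⁻¹ (g⁻¹ - g) (u g⁻¹ - u⁻¹ g)`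
  linear_combination 4 * (1 - g ^ 2) * (1 - (u ^ b) ^ 2) * (g ^ 2 - u ^ 2) * I_sq

theorem toda_character_evaluation_general (N : ℕ) (j : ℕ)
    (hj2 : j ≤ N - 2) (b : ℕ) (hb1 : 1 ≤ b) (hb2 : b ≤ N - 1) (γ : ℂ)
    (ω : ℂ) (hω : ω = Complex.exp (2 * (Real.pi : ℂ) * I / N))
    (q : ℕ → ℂ)
    (hq : ∀ k, q k =
      if k = j then ω ^ (-(j : ℤ)) * Complex.exp (-(2 * (Real.pi : ℂ) * I * γ) / N)
      else if k = j + 1 then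
        ω ^ (-((j : ℤ) + 1)) * Complex.exp (2 * (Real.pi : ℂ) * I * γ / N)
      else ω ^ (-(k : ℤ))) :
    Complex.exp (I * (Real.pi : ℂ) * b * (N - 1) / N) * ω ^ b *
        (∑ s ∈ Finset.powersetCard b (Finset.range N), ∏ k ∈ s, q k) =
      -4 * ω ^ (-((b : ℤ) * j)) * (Complex.sin (b * (Real.pi : ℂ) / N) /
        Complex.sin ((Real.pi : ℂ) / N)) * Complex.sin ((Real.pi : ℂ) * γ / N) *
        Complex.sin ((Real.pi : ℂ) * (1 - γ) / N) := by
  set θ : ℂ := Real.pi / N with hθ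
  set φ : ℂ := Real.pi * γ / N with hφ
  have hωinv : ω⁻¹ = exp (-2 * θ * I) := by rw [hω, ← exp_neg, hθ]; ring_nf
  have hωz (k : ℕ) : ω ^ (-(k : ℤ)) = exp (-2 * θ * I) ^ k := by
    rw [zpow_neg, zpow_natCast, ← inv_pow, hωinv]
  have hζ : IsPrimitiveRoot (exp (-2 * θ * I)) N :=
    hωinv ▸ (hω ▸ isPrimitiveRoot_exp N (by omega)).inv
  have hesymm := hζ.sub_one_mul_esymm_of_scaled_pair (j := j) (b := b)
    (by omega) (by omega) (by omega)
    (x := exp (-2 * φ * I)) (y := exp (2 * φ * I)) (by rw [← exp_add]; ring_nf; exact exp_zero)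
    (q := q) (by rw [hq, if_pos rfl, hωz, hφ]; ring_nf)
    (by rw [hq, if_neg (by omega), if_pos rfl, ← Nat.cast_add_one, hωz, hφ]; ring_nf)
    (fun k hk hk1 => by rw [hq, if_neg hk, if_neg hk1, hωz])
  have hprefactor :
      exp (I * Real.pi * b * (N - 1) / N) * ω ^ b = (-1) ^ b * exp (b * θ * I) := by
    rw [hω, ← exp_pi_mul_I]
    simp only [← exp_nat_mul, ← exp_add]
    congr 1
    have hN0 : (N : ℂ) ≠ 0 := by norm_cast; omega
    rw [hθ]
    field_simp
    ring
  have hζ1 : exp (-2 * θ * I) ≠ 1 := hζ.ne_one (by omega)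
  rw [hprefactor, ← Nat.cast_mul, hωz, show (b * Real.pi / N : ℂ) = b * θ by ring,
    show (Real.pi * (1 - γ) / N : ℂ) = θ - φ by ring]
  apply mul_left_cancel₀ (sub_ne_zero.2 hζ1)
  linear_combination (-1) ^ b * exp (b * θ * I) * hesymm
    + exp (-2 * θ * I) ^ (b * j) * exp (b * θ * I) * (1 - exp (-2 * θ * I) ^ b)
      * (exp (-2 * φ * I) - 1 + exp (-2 * θ * I) * (exp (2 * φ * I) - 1))
      * pow_mul_pow_eq_one b (by norm_num : (-1 : ℂ) * -1 = 1)
    + exp (-2 * θ * I) ^ (b * j) * exp_mul_one_sub_pow_mul_eq_sin_mul_sin θ φ b hζ1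

/-- Evaluation of the character `χ_b` in the affine `A_{N−1}`-Toda model: with
`ω = exp(2πi/N)`, `q_k = ω^{−k}` for `k ∉ {j, j+1}` (in particular `q_0 = 1`),
`q_j = ω^{−j}·exp(−2πiγ̂/N)` and `q_{j+1} = ω^{−(j+1)}·exp(2πiγ̂/N)`, the `b`-th
elementary symmetric polynomial of `q_0, …, q_{N−1}` satisfies
`exp(iπb(N−1)/N)·ω^b·e_b(q) = −4·ω^{−bj}·(sin(bπ/N)/sin(π/N))·sin(πγ̂/N)·sin(π(1−γ̂)/N)`. -/
theorem toda_character_evaluation (N : ℕ) (hN : 3 ≤ N) (j : ℕ) (hj1 : 1 ≤ j)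
    (hj2 : j ≤ N - 2) (b : ℕ) (hb1 : 1 ≤ b) (hb2 : b ≤ N - 1) (γ : ℂ)
    (ω : ℂ) (hω : ω = Complex.exp (2 * (Real.pi : ℂ) * I / N))
    (q : ℕ → ℂ)
    (hq : ∀ k, q k =
      if k = j then ω ^ (-(j : ℤ)) * Complex.exp (-(2 * (Real.pi : ℂ) * I * γ) / N)
      else if k = j + 1 then
        ω ^ (-((j : ℤ) + 1)) * Complex.exp (2 * (Real.pi : ℂ) * I * γ / N)
      else ω ^ (-(k : ℤ))) :
    Complex.exp (I * (Real.pi : ℂ) * b * (N - 1) / N) * ω ^ b *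
        (∑ s ∈ Finset.powersetCard b (Finset.range N), ∏ k ∈ s, q k) =
      -4 * ω ^ (-((b : ℤ) * j)) * (Complex.sin (b * (Real.pi : ℂ) / N) /
        Complex.sin ((Real.pi : ℂ) / N)) * Complex.sin ((Real.pi : ℂ) * γ / N) *
        Complex.sin ((Real.pi : ℂ) * (1 - γ) / N) :=
  toda_character_evaluation_general N j hj2 b hb1 hb2 γ ω hω q hq
end
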